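/- Let (Σ,P) be a Kelvin–Planck theory and let h' and h be distinct hotness levels. The following are equivalent: (i) h' is hotter than h, i.e., every thermodynamical theory (Σ,P†) for which \hat{P†} contains P and also contains a passive heat transfer from h to h' fails to be a Kelvin–Planck theory; (ii) T(σ') > T(σ) for every Clausius–Duhem temperature scale T ∈ T_CD and all σ' ∈ h', σ ∈ h. -/

import Mathlib

open Set

noncomputable section

/-- Signed regular Borel measures on `X`, modeled via the Riesz representation
theorem as the weak-star dual of `C(X, ℝ)`. -/
abbrev Meas (X : Type*) [TopologicalSpace X] := WeakDual ℝ C(X, ℝ)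

/-- The ambient space containing `V(X) = M°(X) ⊕ M(X)`; membership in the
subspace `M°(X)` of the first component is expressed by `p.1 1 = 0`. -/
abbrev VSp (X : Type*) [TopologicalSpace X] := Meas X × Meas X

/-- The cone of nonnegative measures. -/
def PosMeas (X : Type*) [TopologicalSpace X] : Set (Meas X) :=
  {μ | ∀ f : C(X, ℝ), (∀ x, 0 ≤ f x) → 0 ≤ μ f}

variable {X : Type*} [TopologicalSpace X]

/-- The Dirac measure at a point, i.e. the evaluation functional. -/
def dirac (x : X) : Meas X :=
  (⟨⟨⟨fun f => f x, fun _ _ => rfl⟩, fun _ _ => rfl⟩,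
    continuous_eval_const x⟩ : C(X, ℝ) →L[ℝ] ℝ)

/-- The set of nonnegative multiples of members of `P`. -/
def coneOf (P : Set (VSp X)) : Set (VSp X) :=
  {x | ∃ c : ℝ, 0 ≤ c ∧ ∃ p ∈ P, x = c • p}

/-- `\hat P`, the weak-star closure of the cone generated by `P`. -/
def hatP (P : Set (VSp X)) : Set (VSp X) :=
  closure (coneOf P)

/-- A thermodynamical theory: processes have change of condition with total mass
zero (i.e. `P ⊆ V(X)`), and `\hat P` is convex. -/
def IsThermoTheory (P : Set (VSp X)) : Prop :=
  (∀ p ∈ P, p.1 (1 : C(X, ℝ)) = 0) ∧ Convex ℝ (hatP P)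

/-- A Kelvin–Planck theory: a thermodynamical theory with
`\hat P ∩ ({0} × M₊(X)) = {(0,0)}`. -/
def IsKelvinPlanck (P : Set (VSp X)) : Prop :=
  IsThermoTheory P ∧ hatP P ∩ (({0} : Set (Meas X)) ×ˢ PosMeas X) = {(0, 0)}

/-- A Clausius–Duhem pair `(η, T)` for the theory `P`: `η` and `T` are continuous,
`T` is strictly positive, and for every continuous `β` equal pointwise to `1/T`
(such a `β` exists, and is unique, by positivity of `T`), the Clausius–Duhem
inequality `∫ η d(Δm) ≥ ∫ (1/T) dq` holds for every process in `P`. -/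
def IsCDPair (P : Set (VSp X)) (η T : C(X, ℝ)) : Prop :=
  (∀ x, 0 < T x) ∧
    ∀ β : C(X, ℝ), (∀ x, β x = (T x)⁻¹) → ∀ p ∈ P, p.2 β ≤ p.1 η

/-- A Clausius–Duhem temperature scale. -/
def IsCDTemp (P : Set (VSp X)) (T : C(X, ℝ)) : Prop :=
  ∃ η : C(X, ℝ), IsCDPair P η T

/-- Two states are of the same hotness: both `(0, δ_a − δ_b)` and `(0, δ_b − δ_a)`
belong to `\hat P`. -/
def SameHotness (P : Set (VSp X)) (a b : X) : Prop :=
  ((0 : Meas X), dirac a - dirac b) ∈ hatP P ∧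
    ((0 : Meas X), dirac b - dirac a) ∈ hatP P

/-- The hotness level of a state. -/
def hotnessLevel (P : Set (VSp X)) (a : X) : Set X :=
  {b | SameHotness P a b}

/-- A subset of the state space that is a hotness level. -/
def IsHotnessLevel (P : Set (VSp X)) (h : Set X) : Prop :=
  ∃ a : X, h = hotnessLevel P a

/-- The (signed) measure `μ` is supported in the set `A`: `μ` annihilates every
continuous function vanishing on `A`. -/
def SuppIn (μ : Meas X) (A : Set X) : Prop :=
  ∀ f : C(X, ℝ), (∀ x ∈ A, f x = 0) → μ f = 0

/-- `\hat Q` contains a passive heat transfer from hotness level `h` to `h'`: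
an element `(0, μ − μ')` of `\hat Q` with `μ, μ'` nonnegative, `supp μ ⊆ h`,
`supp μ' ⊆ h'` and `μ(h) = μ'(h') > 0` (the common value being the total mass). -/
def IsPassiveHT (Q : Set (VSp X)) (h h' : Set X) : Prop :=
  ∃ μ μ' : Meas X, μ ∈ PosMeas X ∧ μ' ∈ PosMeas X ∧ SuppIn μ h ∧ SuppIn μ' h' ∧
    μ (1 : C(X, ℝ)) = μ' (1 : C(X, ℝ)) ∧ 0 < μ (1 : C(X, ℝ)) ∧
    ((0 : Meas X), μ - μ') ∈ hatP Q

/-- Hotness level `h'` is hotter than `h`: the levels are distinct and every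
thermodynamical theory whose closed process cone contains `P` together with a
passive heat transfer from `h` to `h'` fails to be a Kelvin–Planck theory. -/
def Hotter (P : Set (VSp X)) (h' h : Set X) : Prop :=
  h' ≠ h ∧ ∀ Pd : Set (VSp X), IsThermoTheory Pd → P ⊆ hatP Pd →
    IsPassiveHT Pd h h' → ¬ IsKelvinPlanck Pd

/-- State `a` is hotter than state `b`. -/
def HotterState (P : Set (VSp X)) (a b : X) : Prop :=
  Hotter P (hotnessLevel P a) (hotnessLevel P b)

/-- A Carnot element of the theory `P` operating between hotness levels `h'` and
`h`: a reversible cyclic element `(0, μ' − μ)` with `μ', μ` nonzero nonnegative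
measures supported in `h'`, `h` respectively. -/
def IsCarnotBetween (P : Set (VSp X)) (h' h : Set X) (p : VSp X) : Prop :=
  p ∈ hatP P ∧ -p ∈ hatP P ∧
    ∃ μ' μ : Meas X, μ' ∈ PosMeas X ∧ μ ∈ PosMeas X ∧ μ' ≠ 0 ∧ μ ≠ 0 ∧
      SuppIn μ' h' ∧ SuppIn μ h ∧ p = ((0 : Meas X), μ' - μ)

end

/-!
A theory is Kelvin–Planck exactly when it admits a Clausius–Duhem pair `(η, 1/T)`: one direction
is Hahn–Banach, separating the closed convex cone `hatP P` from the weak-star compact convex set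
`{0} × probMeas X`, the other holds because `∫ (1/T) dq > 0` for every nonzero `q ≥ 0`.
Such a `T` is constant on hotness levels, and a passive heat transfer from `h` to `h'` satisfies
the Clausius–Duhem inequality only if `T h ≥ T h'`. So if some scale has `T σ' ≤ T σ`, adjoining
the transfer `δ_σ → δ_σ'` to `hatP P` leaves a Kelvin–Planck theory, and `h'` is not hotter;
conversely a Kelvin–Planck extension containing a transfer from `h` to `h'` yields a scale with
`T h ≥ T h'`.
-/

open Set

namespace WeakDual

variable {E : Type*} [AddCommGroup E] [Module ℝ E] [TopologicalSpace E]

@[simp] lemma add_apply (μ ν : WeakDual ℝ E) (f : E) : (μ + ν) f = μ f + ν f := rfl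

@[simp] lemma sub_apply (μ ν : WeakDual ℝ E) (f : E) : (μ - ν) f = μ f - ν f := rfl

@[simp] lemma smul_apply (c : ℝ) (μ : WeakDual ℝ E) (f : E) : (c • μ) f = c * μ f := rfl

@[simp] lemma zero_apply (f : E) : (0 : WeakDual ℝ E) f = 0 := rfl

instance instLocallyConvexSpace : LocallyConvexSpace ℝ (WeakDual ℝ E) :=
  WeakBilin.locallyConvexSpace

end WeakDual

section

variable {X : Type*} [TopologicalSpace X]

lemma ContinuousMap.exists_forall_eq_inv {f : C(X, ℝ)} (hf : ∀ x, f x ≠ 0) :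
    ∃ g : C(X, ℝ), ∀ x, g x = (f x)⁻¹ :=
  ⟨⟨fun x => (f x)⁻¹, f.continuous.inv₀ hf⟩, fun _ => rfl⟩

lemma exists_eq_apply_fst_add_apply_snd (L : VSp X →L[ℝ] ℝ) :
    ∃ γ β : C(X, ℝ), ∀ z : VSp X, L z = z.1 γ + z.2 β := by
  obtain ⟨γ, hγ⟩ := LinearMap.dualEmbedding_surjective (topDualPairing ℝ C(X, ℝ))
    (L.comp (.inl ℝ (Meas X) (Meas X)))
  obtain ⟨β, hβ⟩ := LinearMap.dualEmbedding_surjective (topDualPairing ℝ C(X, ℝ))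
    (L.comp (.inr ℝ (Meas X) (Meas X)))
  refine ⟨γ, β, fun z => ?_⟩
  rw [← L.comp_inl_add_comp_inr]
  exact congrArg₂ (· + ·) (DFunLike.congr_fun hγ z.1).symm (DFunLike.congr_fun hβ z.2).symm

section PosMeas

lemma zero_mem_posMeas : (0 : Meas X) ∈ PosMeas X := fun _ _ => le_rfl

lemma dirac_mem_posMeas (x : X) : dirac x ∈ PosMeas X := fun _ hf => hf x

lemma apply_mono_of_mem_posMeas {μ : Meas X} (hμ : μ ∈ PosMeas X) {f g : C(X, ℝ)}
    (hfg : ∀ x, f x ≤ g x) : μ f ≤ μ g := by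
  have := hμ (g - f) fun x => sub_nonneg.2 (hfg x)
  rwa [map_sub, sub_nonneg] at this

lemma isClosed_posMeas : IsClosed (PosMeas X) := by
  simp only [PosMeas, ofPred_forall]
  exact isClosed_iInter fun f => isClosed_iInter fun _ =>
    isClosed_le continuous_const (WeakDual.eval_continuous f)

variable [CompactSpace X]

lemma abs_apply_le_of_mem_posMeas {μ : Meas X} (hμ : μ ∈ PosMeas X) (f : C(X, ℝ)) :
    |μ f| ≤ ‖f‖ * μ 1 := by
  have hf : ∀ x, |f x| ≤ ‖f‖ := fun x => by simpa using f.norm_coe_le_norm x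
  have upper := apply_mono_of_mem_posMeas hμ (f := f) (g := ‖f‖ • 1)
    fun x => by simpa using (le_abs_self _).trans (hf x)
  have lower := apply_mono_of_mem_posMeas hμ (f := -(‖f‖ • 1)) (g := f)
    fun x => by simpa using neg_le_of_abs_le (hf x)
  rw [map_smul, smul_eq_mul] at upper
  rw [map_neg, map_smul, smul_eq_mul] at lower
  exact abs_le.2 ⟨lower, upper⟩

lemma eq_zero_of_mem_posMeas_of_apply_nonpos {μ : Meas X} (hμ : μ ∈ PosMeas X)
    {β : C(X, ℝ)} (hβ : ∀ x, 0 < β x) (hμβ : μ β ≤ 0) : μ = 0 := by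
  obtain ⟨γ, hγ⟩ := β.exists_forall_eq_inv fun x => (hβ x).ne'
  have hmass : μ 1 ≤ 0 := by
    have h1 : ∀ x, (1 : C(X, ℝ)) x ≤ (‖γ‖ • β) x := fun x => by
      have : γ x ≤ ‖γ‖ := (le_abs_self _).trans (by simpa using γ.norm_coe_le_norm x)
      calc (1 : C(X, ℝ)) x = γ x * β x := by simp [hγ, (hβ x).ne']
        _ ≤ ‖γ‖ * β x := mul_le_mul_of_nonneg_right this (hβ x).le
    have := apply_mono_of_mem_posMeas hμ h1
    rw [map_smul, smul_eq_mul] at this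
    nlinarith [norm_nonneg γ]
  refine ContinuousLinearMap.ext fun f => abs_nonpos_iff.1 ?_
  exact (abs_apply_le_of_mem_posMeas hμ f).trans
    (mul_nonpos_of_nonneg_of_nonpos (norm_nonneg f) hmass)

end PosMeas

def probMeas (X : Type*) [TopologicalSpace X] : Set (Meas X) :=
  PosMeas X ∩ {π | π 1 = 1}

lemma convex_probMeas : Convex ℝ (probMeas X) := by
  rintro π ⟨hπ, hπ1 : π 1 = 1⟩ ρ ⟨hρ, hρ1 : ρ 1 = 1⟩ s t hs ht hst
  refine ⟨fun f hf => ?_, ?_⟩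
  · simpa using add_nonneg (mul_nonneg hs (hπ f hf)) (mul_nonneg ht (hρ f hf))
  · simp [hπ1, hρ1, hst]

lemma isCompact_probMeas [CompactSpace X] : IsCompact (probMeas X) := by
  refine (WeakDual.isCompact_closedBall 0 1).of_isClosed_subset
    (isClosed_posMeas.inter (isClosed_eq (WeakDual.eval_continuous 1) continuous_const)) ?_
  rintro π ⟨hπ, hπ1 : π 1 = 1⟩
  rw [mem_preimage, mem_closedBall_zero_iff]
  refine ContinuousLinearMap.opNorm_le_bound _ zero_le_one fun f => ?_
  simpa [hπ1, mul_comm] using abs_apply_le_of_mem_posMeas hπ f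

section hatP

variable {Q R : Set (VSp X)}

lemma subset_hatP (Q : Set (VSp X)) : Q ⊆ hatP Q := fun p hp =>
  subset_closure ⟨1, zero_le_one, p, hp, (one_smul ℝ p).symm⟩

lemma zero_mem_hatP (hQ : Q.Nonempty) : (0 : VSp X) ∈ hatP Q :=
  have ⟨p, hp⟩ := hQ
  subset_closure ⟨0, le_rfl, p, hp, (zero_smul ℝ p).symm⟩

lemma IsKelvinPlanck.zero_mem_hatP (hQ : IsKelvinPlanck Q) : (0 : VSp X) ∈ hatP Q :=
  (hQ.2.symm ▸ rfl : ((0, 0) : VSp X) ∈ hatP Q ∩ (({0} : Set (Meas X)) ×ˢ PosMeas X)).1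

lemma smul_mem_hatP {c : ℝ} (hc : 0 ≤ c) {x : VSp X} (hx : x ∈ hatP Q) : c • x ∈ hatP Q :=
  map_mem_closure (continuous_const_smul c) hx fun _ ⟨c', hc', p, hp, hy⟩ =>
    ⟨c * c', mul_nonneg hc hc', p, hp, by rw [hy, smul_smul]⟩

lemma hatP_subset_of_isClosed {S : Set (VSp X)} (hS : IsClosed S)
    (hS_smul : ∀ c : ℝ, 0 ≤ c → ∀ x ∈ S, c • x ∈ S) (hQS : Q ⊆ S) : hatP Q ⊆ S :=
  closure_minimal (fun _ ⟨c, hc, p, hp, hx⟩ => hx ▸ hS_smul c hc p (hQS hp)) hS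

lemma hatP_subset_hatP (h : Q ⊆ hatP R) : hatP Q ⊆ hatP R :=
  hatP_subset_of_isClosed isClosed_closure (fun _ hc _ hx => smul_mem_hatP hc hx) h

lemma IsThermoTheory.fst_apply_one_eq_zero (hQ : IsThermoTheory Q) :
    ∀ p ∈ hatP Q, p.1 1 = 0 :=
  hatP_subset_of_isClosed (S := {p | p.1 1 = 0})
    (isClosed_eq ((WeakDual.eval_continuous 1).comp continuous_fst) continuous_const)
    (fun c _ p (hp : p.1 1 = 0) => show c * p.1 1 = 0 by rw [hp, mul_zero]) hQ.1

end hatP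

/-- `β` stands for the reciprocal `1/T` of a temperature scale, which makes the Clausius–Duhem
inequality linear in `(η, β)`. -/
def ClausiusDuhem (Q : Set (VSp X)) (η β : C(X, ℝ)) : Prop :=
  ∀ p ∈ Q, p.2 β ≤ p.1 η

section ClausiusDuhem

variable {Q : Set (VSp X)} {η β : C(X, ℝ)}

lemma ClausiusDuhem.to_hatP (h : ClausiusDuhem Q η β) : ClausiusDuhem (hatP Q) η β := by
  refine hatP_subset_of_isClosed (S := {p | p.2 β ≤ p.1 η}) ?_ (fun c hc p hp => ?_) h
  · exact isClosed_le ((WeakDual.eval_continuous β).comp continuous_snd)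
      ((WeakDual.eval_continuous η).comp continuous_fst)
  · simpa using mul_le_mul_of_nonneg_left hp hc

lemma isCDTemp_of_clausiusDuhem (hβ : ∀ x, 0 < β x) (h : ClausiusDuhem Q η β)
    {T : C(X, ℝ)} (hT : ∀ x, T x = (β x)⁻¹) : IsCDTemp Q T := by
  refine ⟨η, fun x => hT x ▸ inv_pos.2 (hβ x), fun β' hβ' => ?_⟩
  have : β' = β := ContinuousMap.ext fun x => by rw [hβ', hT, inv_inv]
  exact this ▸ h

lemma ClausiusDuhem.eq_of_sameHotness (h : ClausiusDuhem (hatP Q) η β) {a b : X}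
    (hab : SameHotness Q a b) : β a = β b := by
  have hab' := h _ hab.1
  have hba := h _ hab.2
  simp only [WeakDual.sub_apply, WeakDual.zero_apply, sub_nonpos] at hab' hba
  exact le_antisymm hab' hba

end ClausiusDuhem

lemma mem_hotnessLevel_self {Q : Set (VSp X)} (h0 : (0 : VSp X) ∈ hatP Q) (a : X) :
    a ∈ hotnessLevel Q a := by
  have : ((0 : Meas X), dirac a - dirac a) ∈ hatP Q := by rwa [sub_self]
  exact ⟨this, this⟩

lemma SuppIn.apply_eq_mul {μ : Meas X} {A : Set X} (hμ : SuppIn μ A) {f : C(X, ℝ)} {c : ℝ}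
    (hf : ∀ x ∈ A, f x = c) : μ f = c * μ 1 := by
  have := hμ (f - c • 1) fun x hx => by simp [hf x hx]
  rwa [map_sub, map_smul, smul_eq_mul, sub_eq_zero] at this

lemma IsPassiveHT.le_of_clausiusDuhem {Q : Set (VSp X)} {h h' : Set X} (hQ : IsPassiveHT Q h h')
    {η β : C(X, ℝ)} (hCD : ClausiusDuhem (hatP Q) η β) {c c' : ℝ} (hc : ∀ x ∈ h, β x = c)
    (hc' : ∀ x ∈ h', β x = c') : c ≤ c' := by
  obtain ⟨μ, μ', -, -, hμ, hμ', hmass, hpos, hmem⟩ := hQ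
  have := hCD _ hmem
  simp only [WeakDual.sub_apply, WeakDual.zero_apply, sub_nonpos, hμ.apply_eq_mul hc,
    hμ'.apply_eq_mul hc', ← hmass] at this
  exact le_of_mul_le_mul_right this hpos

lemma isPassiveHT_of_mem_hatP {Q : Set (VSp X)} {h h' : Set X} {b a : X} (hb : b ∈ h)
    (ha : a ∈ h') (hmem : ((0 : Meas X), dirac b - dirac a) ∈ hatP Q) : IsPassiveHT Q h h' :=
  ⟨dirac b, dirac a, dirac_mem_posMeas b, dirac_mem_posMeas a, fun _ hf => hf b hb,
    fun _ hf => hf a ha, rfl, zero_lt_one, hmem⟩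

section KelvinPlanck

variable [CompactSpace X] {Q : Set (VSp X)}

lemma IsThermoTheory.isKelvinPlanck_of_clausiusDuhem (hQ : IsThermoTheory Q) (hne : Q.Nonempty)
    {η β : C(X, ℝ)} (hβ : ∀ x, 0 < β x) (hCD : ClausiusDuhem Q η β) : IsKelvinPlanck Q := by
  refine ⟨hQ, Subset.antisymm (fun x ⟨hx, hx₁, hx₂⟩ => ?_) ?_⟩
  · have hx₁ : x.1 = 0 := hx₁
    have := hCD.to_hatP x hx
    rw [hx₁, WeakDual.zero_apply] at this
    exact Prod.ext hx₁ (eq_zero_of_mem_posMeas_of_apply_nonpos hx₂ hβ this)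
  · rintro _ rfl
    exact ⟨zero_mem_hatP hne, rfl, zero_mem_posMeas⟩

lemma IsKelvinPlanck.exists_clausiusDuhem (hQ : IsKelvinPlanck Q) :
    ∃ η β : C(X, ℝ), (∀ x, 0 < β x) ∧ ClausiusDuhem (hatP Q) η β := by
  have hdisj : Disjoint (hatP Q) (({0} : Set (Meas X)) ×ˢ probMeas X) := by
    refine disjoint_left.2 fun x hx ⟨hx₁, hx₂, hx₃⟩ => ?_
    have : x ∈ ({(0, 0)} : Set (VSp X)) := hQ.2 ▸ ⟨hx, hx₁, hx₂⟩
    subst this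
    exact zero_ne_one hx₃
  obtain ⟨L, u, v, hLu, huv, hvL⟩ := geometric_hahn_banach_closed_compact hQ.1.2
    isClosed_closure ((convex_singleton 0).prod convex_probMeas)
    (isCompact_singleton.prod isCompact_probMeas) hdisj
  have hu : 0 < u := by simpa using hLu 0 hQ.zero_mem_hatP
  have hL : ∀ x ∈ hatP Q, L x ≤ 0 := by
    refine fun x hx => not_lt.1 fun hLx => (hLu _ (smul_mem_hatP (div_pos hu hLx).le hx)).ne ?_
    rw [map_smul, smul_eq_mul, div_mul_cancel₀ u hLx.ne']
  obtain ⟨γ, β, hγβ⟩ := exists_eq_apply_fst_add_apply_snd L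
  refine ⟨-γ, β, fun x => ?_, fun p hp => ?_⟩
  · have := hvL (0, dirac x) ⟨rfl, dirac_mem_posMeas x, rfl⟩
    rw [hγβ] at this
    simp only [WeakDual.zero_apply, zero_add] at this
    exact hu.trans (huv.trans this)
  · have := hL p hp
    rw [hγβ] at this
    rw [map_neg]
    linarith

end KelvinPlanck

/-- Adjoining `v` as `hatP Q + ℝ≥0 • v` rather than as `Q ∪ {v}` keeps the closed cone convex. -/
def adjoinRay (Q : Set (VSp X)) (v : VSp X) : Set (VSp X) :=
  {z | ∃ p ∈ hatP Q, ∃ t : ℝ, 0 ≤ t ∧ z = p + t • v}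

section adjoinRay

variable {Q : Set (VSp X)} {v : VSp X}

lemma hatP_subset_adjoinRay : hatP Q ⊆ adjoinRay Q v :=
  fun p hp => ⟨p, hp, 0, le_rfl, by simp⟩

lemma mem_adjoinRay (h0 : (0 : VSp X) ∈ hatP Q) : v ∈ adjoinRay Q v :=
  ⟨0, h0, 1, zero_le_one, by simp⟩

lemma hatP_adjoinRay : hatP (adjoinRay Q v) = closure (adjoinRay Q v) := by
  refine congrArg closure (Subset.antisymm ?_ fun z hz =>
    ⟨1, zero_le_one, z, hz, (one_smul ℝ z).symm⟩)
  rintro _ ⟨c, hc, _, ⟨p, hp, t, ht, rfl⟩, rfl⟩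
  exact ⟨c • p, smul_mem_hatP hc hp, c * t, mul_nonneg hc ht, by rw [smul_add, smul_smul]⟩

lemma IsThermoTheory.adjoinRay (hQ : IsThermoTheory Q) (hv : v.1 1 = 0) :
    IsThermoTheory (adjoinRay Q v) := by
  refine ⟨?_, ?_⟩
  · rintro _ ⟨p, hp, t, -, rfl⟩
    simp [hQ.fst_apply_one_eq_zero p hp, hv]
  · rw [hatP_adjoinRay]
    refine Convex.closure ?_
    rintro _ ⟨p, hp, t, ht, rfl⟩ _ ⟨p', hp', t', ht', rfl⟩ a b ha hb hab
    refine ⟨a • p + b • p', hQ.2 hp hp' ha hb hab, a * t + b * t', by positivity, ?_⟩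
    module

lemma ClausiusDuhem.adjoinRay {η β : C(X, ℝ)} (h : ClausiusDuhem (hatP Q) η β)
    (hv : v.2 β ≤ v.1 η) : ClausiusDuhem (adjoinRay Q v) η β := by
  rintro _ ⟨p, hp, t, ht, rfl⟩
  simpa using add_le_add (h p hp) (mul_le_mul_of_nonneg_left hv ht)

end adjoinRay

section Hotter

variable [CompactSpace X] {P : Set (VSp X)}

lemma IsKelvinPlanck.exists_isKelvinPlanck_isPassiveHT_of_le (hP : IsKelvinPlanck P)
    {T : C(X, ℝ)} (hT : IsCDTemp P T) {h h' : Set X} {σ σ' : X} (hσ : σ ∈ h) (hσ' : σ' ∈ h')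
    (hle : T σ' ≤ T σ) : ∃ Pd, P ⊆ hatP Pd ∧ IsPassiveHT Pd h h' ∧ IsKelvinPlanck Pd := by
  obtain ⟨η, hTpos, hCD⟩ := hT
  obtain ⟨β, hβ⟩ := T.exists_forall_eq_inv fun x => (hTpos x).ne'
  set v : VSp X := (0, dirac σ - dirac σ')
  have h0 := hP.zero_mem_hatP
  have hCDβ : ClausiusDuhem P η β := hCD β hβ
  have hv : v.2 β ≤ v.1 η := show β σ - β σ' ≤ 0 by
    rw [hβ, hβ, sub_nonpos]
    exact inv_anti₀ (hTpos σ') hle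
  refine ⟨adjoinRay P v, (subset_hatP P).trans (hatP_subset_adjoinRay.trans (subset_hatP _)),
    isPassiveHT_of_mem_hatP hσ hσ' (subset_hatP _ (mem_adjoinRay h0)),
    (hP.1.adjoinRay rfl).isKelvinPlanck_of_clausiusDuhem ⟨v, mem_adjoinRay h0⟩
      (fun x => hβ x ▸ inv_pos.2 (hTpos x)) (hCDβ.to_hatP.adjoinRay hv)⟩

lemma IsKelvinPlanck.exists_isCDTemp_le_of_isPassiveHT {Q : Set (VSp X)} (hQ : IsKelvinPlanck Q)
    (hPQ : P ⊆ hatP Q) {a b : X} (hHT : IsPassiveHT Q (hotnessLevel P b) (hotnessLevel P a)) :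
    ∃ T : C(X, ℝ), IsCDTemp P T ∧ T a ≤ T b := by
  obtain ⟨η, β, hβ, hCD⟩ := hQ.exists_clausiusDuhem
  have hCDP : ClausiusDuhem (hatP P) η β := fun p hp => hCD p (hatP_subset_hatP hPQ hp)
  obtain ⟨T, hT⟩ := β.exists_forall_eq_inv fun x => (hβ x).ne'
  refine ⟨T, isCDTemp_of_clausiusDuhem hβ (fun p hp => hCDP p (subset_hatP P hp)) hT, ?_⟩
  rw [hT, hT]
  exact inv_anti₀ (hβ b) <| hHT.le_of_clausiusDuhem hCD
    (fun x hx => (hCDP.eq_of_sameHotness hx).symm) fun x hx => (hCDP.eq_of_sameHotness hx).symm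

end Hotter

end

theorem hotter_iff_temperature_gt_general
    {X : Type*} [TopologicalSpace X] [CompactSpace X]
    (P : Set (VSp X)) (hP : IsKelvinPlanck P) (a b : X)
    (hne : hotnessLevel P a ≠ hotnessLevel P b) :
    Hotter P (hotnessLevel P a) (hotnessLevel P b) ↔
      ∀ T : C(X, ℝ), IsCDTemp P T →
        ∀ a' ∈ hotnessLevel P a, ∀ b' ∈ hotnessLevel P b, T b' < T a' := by
  constructor
  · rintro ⟨-, hH⟩ T hT a' ha' b' hb'
    by_contra! hle
    obtain ⟨Pd, hPPd, hHT, hKP⟩ := hP.exists_isKelvinPlanck_isPassiveHT_of_le hT hb' ha' hle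
    exact hH Pd hKP.1 hPPd hHT hKP
  · refine fun hTemp => ⟨hne, fun Pd _ hPPd hHT hKP => ?_⟩
    obtain ⟨T, hT, hle⟩ := hKP.exists_isCDTemp_le_of_isPassiveHT hPPd hHT
    have h0 := hP.zero_mem_hatP
    exact (hTemp T hT a (mem_hotnessLevel_self h0 a) b (mem_hotnessLevel_self h0 b)).not_ge hle

/-- **Theorem.** Let `(X, P)` be a Kelvin–Planck theory and let `h' = [a]`, `h = [b]`
be distinct hotness levels.  The following are equivalent:
(i) `h'` is hotter than `h`;
(ii) `T σ' > T σ` for every Clausius–Duhem temperature scale `T` and all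
`σ' ∈ h'`, `σ ∈ h`. -/
theorem hotter_iff_temperature_gt
    {X : Type*} [TopologicalSpace X] [CompactSpace X] [T2Space X]
    (P : Set (VSp X)) (hP : IsKelvinPlanck P) (a b : X)
    (hne : hotnessLevel P a ≠ hotnessLevel P b) :
    Hotter P (hotnessLevel P a) (hotnessLevel P b) ↔
      ∀ T : C(X, ℝ), IsCDTemp P T →
        ∀ a' ∈ hotnessLevel P a, ∀ b' ∈ hotnessLevel P b, T b' < T a' :=
  hotter_iff_temperature_gt_general P hP a b hne
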